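/- Let P be a submodule of an R-module M with (P : M) ∩ S = ∅. Then P is an S-primary submodule of M if and only if (P :_M s) = {m ∈ M | s • m ∈ P} is a primary submodule of M for some s ∈ S. -/

import Mathlib

/-- `P` is an `S`-primary submodule of `M`. -/
def IsSPrimary {R M : Type*} [CommRing R] [AddCommGroup M] [Module R M]
    (S : Set R) (P : Submodule R M) : Prop :=
  (∀ s ∈ S, s ∉ P.colon ⊤) ∧
  ∃ s ∈ S, ∀ (r : R) (m : M), r • m ∈ P → s * r ∈ (P.colon ⊤).radical ∨ s • m ∈ P

/-- `Q` is a primary submodule of the `A`-module `N`. -/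
def IsPrimarySub {A N : Type*} [CommRing A] [AddCommGroup N] [Module A N]
    (Q : Submodule A N) : Prop :=
  Q ≠ ⊤ ∧ ∀ (r : A) (n : N), r • n ∈ Q → n ∈ Q ∨ r ∈ (Q.colon ⊤).radical

/-!
Write `(P :_M s)` for `P.comap (LinearMap.lsmul R M s)`. Its colon ideal is `(P : M) : s`, so
`r ∈ √((P :_M s) : M)` iff `s * r ^ k ∈ (P : M)` for some `k`, which forces `s * r ∈ √(P : M)`.
With this, the two primary conditions translate into each other. In the forward direction the
extra factors of `s` are absorbed by `s ^ k • x ∈ P → s • x ∈ P`, which holds because no power of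
`s` lies in `√(P : M)` (as `S` is multiplicatively closed and disjoint from `(P : M)`).
-/

section

variable {R M : Type*} [CommRing R] [AddCommGroup M] [Module R M]

theorem Submodule.mem_colon_top_comap_lsmul {P : Submodule R M} {s r : R} :
    r ∈ (P.comap (LinearMap.lsmul R M s)).colon ⊤ ↔ s * r ∈ P.colon ⊤ := by
  simp only [Submodule.mem_colon, Submodule.mem_comap, LinearMap.lsmul_apply, mul_smul]

theorem Ideal.mul_mem_radical_of_mul_pow_mem {I : Ideal R} {s r : R} {k : ℕ}
    (h : s * r ^ k ∈ I) : s * r ∈ I.radical :=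
  ⟨k + 1, by
    rw [show (s * r) ^ (k + 1) = s ^ k * r * (s * r ^ k) by ring]
    exact I.mul_mem_left _ h⟩

theorem Set.pow_succ_mem_of_mul_mem {S : Set R} (hSmul : ∀ a ∈ S, ∀ b ∈ S, a * b ∈ S)
    {s : R} (hs : s ∈ S) (n : ℕ) : s ^ (n + 1) ∈ S := by
  induction n with
  | zero => simpa using hs
  | succ n ih => rw [pow_succ]; exact hSmul _ ih _ hs

theorem Ideal.notMem_radical_of_mulClosed {S : Set R} (hSmul : ∀ a ∈ S, ∀ b ∈ S, a * b ∈ S)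
    {I : Ideal R} (hdisj : ∀ s ∈ S, s ∉ I) {s : R} (hs : s ∈ S) : s ∉ I.radical := by
  rintro ⟨n, hn⟩
  exact hdisj _ (Set.pow_succ_mem_of_mul_mem hSmul hs n)
    (by rw [pow_succ]; exact I.mul_mem_right s hn)

def IsSPrimaryAt (P : Submodule R M) (s : R) : Prop :=
  ∀ (r : R) (m : M), r • m ∈ P → s * r ∈ (P.colon ⊤).radical ∨ s • m ∈ P

theorem IsSPrimaryAt.smul_mem_of_pow_smul_mem {P : Submodule R M} {s : R}
    (hs : IsSPrimaryAt P s) (hrad : s ∉ (P.colon ⊤).radical) {k : ℕ} {x : M}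
    (hx : s ^ k • x ∈ P) : s • x ∈ P :=
  (hs _ x hx).resolve_left fun h ↦
    hrad (Ideal.mem_radical_of_pow_mem (by rwa [← pow_succ'] at h))

theorem IsSPrimaryAt.isPrimarySub_comap_lsmul {P : Submodule R M} {s : R}
    (hs : IsSPrimaryAt P s) (hrad : s ∉ (P.colon ⊤).radical) :
    IsPrimarySub (P.comap (LinearMap.lsmul R M s)) := by
  refine ⟨fun htop ↦ hrad (Ideal.le_radical (Submodule.mem_colon.2 fun m _ ↦ ?_)),
    fun r n hrn ↦ ?_⟩
  · exact (htop ▸ Submodule.mem_top : m ∈ P.comap (LinearMap.lsmul R M s))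
  have hrsn : r • s • n ∈ P := by rw [smul_comm]; exact hrn
  rcases hs r (s • n) hrsn with ⟨k, hk⟩ | hssn
  · right
    refine ⟨k, Submodule.mem_colon_top_comap_lsmul.2 (Submodule.mem_colon.2 fun m _ ↦ ?_)⟩
    have hsk : s ^ k • r ^ k • m ∈ P := by
      rw [← mul_smul, ← mul_pow]; exact Submodule.mem_colon.1 hk m trivial
    rw [mul_smul]
    exact hs.smul_mem_of_pow_smul_mem hrad hsk
  · left
    exact hs.smul_mem_of_pow_smul_mem hrad (k := 2) (by rwa [pow_two, mul_smul])

theorem IsPrimarySub.isSPrimaryAt {P : Submodule R M} {s : R}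
    (hQ : IsPrimarySub (P.comap (LinearMap.lsmul R M s))) : IsSPrimaryAt P s := by
  intro r m hrm
  rcases hQ.2 r m (P.smul_mem s hrm) with hm | ⟨k, hk⟩
  · exact Or.inr hm
  · exact Or.inl (Ideal.mul_mem_radical_of_mul_pow_mem
      (Submodule.mem_colon_top_comap_lsmul.1 hk))

end

theorem stmt18_general {R M : Type*} [CommRing R] [AddCommGroup M] [Module R M]
    (S : Set R)
    (hSmul : ∀ a ∈ S, ∀ b ∈ S, a * b ∈ S)
    (P : Submodule R M) (hdisj : ∀ s ∈ S, s ∉ P.colon ⊤) :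
    IsSPrimary S P ↔
      ∃ s ∈ S, IsPrimarySub (P.comap (LinearMap.lsmul R M s)) := by
  constructor
  · rintro ⟨-, s, hsS, hs⟩
    exact ⟨s, hsS, IsSPrimaryAt.isPrimarySub_comap_lsmul hs
      (Ideal.notMem_radical_of_mulClosed hSmul hdisj hsS)⟩
  · rintro ⟨s, hsS, hQ⟩
    exact ⟨hdisj, s, hsS, hQ.isSPrimaryAt⟩

theorem stmt18 {R M : Type*} [CommRing R] [AddCommGroup M] [Module R M]
    (S : Set R) (hS0 : (0 : R) ∉ S) (hS1 : (1 : R) ∈ S)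
    (hSmul : ∀ a ∈ S, ∀ b ∈ S, a * b ∈ S)
    (P : Submodule R M) (hdisj : ∀ s ∈ S, s ∉ P.colon ⊤) :
    IsSPrimary S P ↔
      ∃ s ∈ S, IsPrimarySub (P.comap (LinearMap.lsmul R M s)) :=
  stmt18_general S hSmul P hdisj
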